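/- Let Π be the two-phase reach-avoid problem on transition system S = (X,U,F) with running cost g, associated with nonempty A₁, A₂ ⊆ X and G₀ : X → [0,∞], with closed-loop performance L. Let Π₂ be the reach-avoid problem associated with A₂ and G₀ with closed-loop performance L₂, and let μ₂ be a memoryless controller optimal for Π₂. Let Π₁ be the reach-avoid problem associated with A₁ and terminal cost L₂(·,μ₂), with closed-loop performance L₁, and let μ₁ be a memoryless controller optimal for Π₁. Then for every controller μ* that is optimal for Π and every p ∈ X, L(p,μ*) ≥ L₁(p,μ₁). -/

import Mathlib

/-!
Let `ν` be the controller that plays `μ*` until `A₁` is first reached and stops there. Along a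
closed loop of `ν` stopping at the first visit `T` of `A₁`, the cost for `Π₁` is the running
cost up to `T` plus `L₂(x T, μ₂) = V₂(x T)`. The tail of `μ*` after this history is a controller for `Π₂`,
so `V₂(x T)` is at most its performance, and splicing the history with the closed loops of
that tail gives closed loops of `μ*` whose cost for `Π` is at least as large, because `A₁` has
been visited. If `ν` stops anywhere else, `μ*` admits a closed loop of infinite cost. Hence
`L₁(p, μ₁) = V₁(p) ≤ L₁(p, ν) ≤ L(p, μ*)`.
-/

open scoped ENNReal Classical

namespace TwoPhase

noncomputable section

variable {X U : Type*}

/-- The behaviour of the transition system `(X, U, F)` initialized at `p`: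
`x 0 = p` and `x (t+1) ∈ F (x t) (u t)` for all `t`. -/
def Behaviour (F : X → U → Set X) (p : X) (u : ℕ → U) (x : ℕ → X) : Prop :=
  x 0 = p ∧ ∀ t, x (t + 1) ∈ F (x t) (u t)

/-- A general (history-dependent) controller, encoded as a map depending on the
time `t` and the full signals, required to be strict (nonempty valued) and causal:
its value at time `t` only depends on `x|[0;t]` and `u|[0;t)`. -/
def IsController (μ : ℕ → (ℕ → X) → (ℕ → U) → Set (U × Bool)) : Prop :=
  (∀ t x u, (μ t x u).Nonempty) ∧
    ∀ (t : ℕ) (x x' : ℕ → X) (u u' : ℕ → U),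
      (∀ s ≤ t, x s = x' s) → (∀ s < t, u s = u' s) → μ t x u = μ t x' u'

/-- The history-dependent controller induced by a memoryless controller. -/
def ofMemoryless (μ : X → Set (U × Bool)) : ℕ → (ℕ → X) → (ℕ → U) → Set (U × Bool) :=
  fun t x _ => μ (x t)

/-- The closed-loop behaviour `B_p(μ × S)`. -/
def ClosedLoop (F : X → U → Set X) (μ : ℕ → (ℕ → X) → (ℕ → U) → Set (U × Bool))
    (p : X) (u : ℕ → U) (v : ℕ → Bool) (x : ℕ → X) : Prop :=
  Behaviour F p u x ∧ ∀ t, (u t, v t) ∈ μ t x u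

/-- The total cost `J(u,v,x)` associated with running cost `g` and
trajectory cost `G` (where `G T x` is the cost of the finite trajectory `x|[0;T]`):
if `v` is not identically `0` and `T = min v⁻¹(1)`, it is
`∑_{t<T} g (x t) (x (t+1)) (u t) + G T x`; otherwise it is `∞`. -/
def totalCost (g : X → X → U → ℝ≥0∞) (G : ℕ → (ℕ → X) → ℝ≥0∞)
    (u : ℕ → U) (v : ℕ → Bool) (x : ℕ → X) : ℝ≥0∞ :=
  if h : ∃ t, v t = true then
    (∑ t ∈ Finset.range (Nat.find h), g (x t) (x (t + 1)) (u t)) + G (Nat.find h) x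
  else ⊤

/-- The closed-loop performance `L(p, μ)` of the optimal control problem
`(X, U, F, G, g)`. -/
def perf (F : X → U → Set X) (g : X → X → U → ℝ≥0∞) (G : ℕ → (ℕ → X) → ℝ≥0∞)
    (μ : ℕ → (ℕ → X) → (ℕ → U) → Set (U × Bool)) (p : X) : ℝ≥0∞ :=
  ⨆ (u : ℕ → U) (v : ℕ → Bool) (x : ℕ → X) (_ : ClosedLoop F μ p u v x),
    totalCost g G u v x

/-- The value function `V(p)` of the optimal control problem `(X, U, F, G, g)`. -/
def value (F : X → U → Set X) (g : X → X → U → ℝ≥0∞) (G : ℕ → (ℕ → X) → ℝ≥0∞)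
    (p : X) : ℝ≥0∞ :=
  ⨅ (μ : ℕ → (ℕ → X) → (ℕ → U) → Set (U × Bool)) (_ : IsController μ),
    perf F g G μ p

/-- The (terminal) trajectory cost of the reach-avoid problem associated with `A`
and `G₀`. -/
def reachAvoidCost (A : Set X) (G₀ : X → ℝ≥0∞) : ℕ → (ℕ → X) → ℝ≥0∞ :=
  fun T x => if x T ∈ A then G₀ (x T) else ⊤

/-- The trajectory cost of the two-phase reach-avoid problem associated with
`A₁`, `A₂` and `G₀`. -/
def twoPhaseCost (A₁ A₂ : Set X) (G₀ : X → ℝ≥0∞) : ℕ → (ℕ → X) → ℝ≥0∞ :=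
  fun t x => if (∃ s ≤ t, x s ∈ A₁) ∧ x t ∈ A₂ then G₀ (x t) else ⊤

/-- A trajectory cost which is a terminal cost `G : X → [0,∞]`. -/
def termCost (G : X → ℝ≥0∞) : ℕ → (ℕ → X) → ℝ≥0∞ := fun T x => G (x T)

/-- The stopping component of a memoryless controller is single-valued. -/
def SVStop (μ : X → Set (U × Bool)) : Prop :=
  ∀ q : X, (∀ w ∈ μ q, w.2 = false) ∨ (∀ w ∈ μ q, w.2 = true)

/-- The composed controller `μ` of Proposition 1: it plays `μ₁` as long as the
stopping signal `w` of `μ₁` along `x` satisfies `w s = 0` for all `s ∈ [0;t]`,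
and plays `μ₂` afterwards. -/
def composed (μ₁ μ₂ : X → Set (U × Bool)) :
    ℕ → (ℕ → X) → (ℕ → U) → Set (U × Bool) :=
  fun t x _ =>
    if ∀ s ≤ t, ∀ w ∈ μ₁ (x s), w.2 = false then μ₁ (x t) else μ₂ (x t)

/-- The refined controller `μ' ∘ Q` of a memoryless abstract controller `μ'`,
where `Q` is the quantizer: `(μ' ∘ Q) p = ⋃_{Ω ∈ X', p ∈ Ω} μ' Ω`. -/
def refineCtrl {XA : Set (Set X)} {UA : Set U} (μ' : ↥XA → Set (↥UA × Bool)) :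
    X → Set (U × Bool) :=
  fun p => ⋃ (Ω : ↥XA) (_ : p ∈ (Ω : Set X)),
    (fun w : ↥UA × Bool => ((w.1 : U), w.2)) '' μ' Ω

end

end TwoPhase

namespace TwoPhase

section Splice

variable {α : Type*}

def splice (T : ℕ) (f f' : ℕ → α) : ℕ → α := fun s => if s < T then f s else f' (s - T)

variable {T : ℕ} {f f' : ℕ → α}

lemma splice_of_lt {s : ℕ} (h : s < T) : splice T f f' s = f s := if_pos h

lemma splice_add (k : ℕ) : splice T f f' (T + k) = f' k := by
  simp [splice]

lemma splice_of_le (hf : f' 0 = f T) {s : ℕ} (h : s ≤ T) : splice T f f' s = f s := by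
  rcases h.lt_or_eq with h | rfl
  · exact splice_of_lt h
  · simpa [splice] using hf

end Splice

section StabilizingSequence

variable {α : Type*} {f : ℕ → ℕ → α} {n : ℕ}

lemma apply_eq_of_le_of_agree (hf : ∀ k s, s < n + k → f (k + 1) s = f k s) {k k' s : ℕ}
    (hk : k ≤ k') (hs : s < n + k) : f k' s = f k s := by
  induction k', hk using Nat.le_induction with
  | base => rfl
  | succ k' _ ih => rw [hf k' s (by omega), ih]

lemma apply_eq_diag_of_agree (hf : ∀ k s, s < n + k → f (k + 1) s = f k s) {k s : ℕ}
    (hs : s < n + k) : f k s = f (s + 1) s := by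
  rcases le_total k (s + 1) with h | h
  · exact (apply_eq_of_le_of_agree hf h hs).symm
  · exact apply_eq_of_le_of_agree hf h (by omega)

end StabilizingSequence

section ClosedLoop

variable {X U : Type*} {F : X → U → Set X} {g : X → X → U → ℝ≥0∞}
  {G : ℕ → (ℕ → X) → ℝ≥0∞} {μ : ℕ → (ℕ → X) → (ℕ → U) → Set (U × Bool)}
  {p : X} {u : ℕ → U} {v : ℕ → Bool} {x : ℕ → X}

noncomputable def runningCost (g : X → X → U → ℝ≥0∞) (u : ℕ → U) (x : ℕ → X) (N : ℕ) : ℝ≥0∞ :=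
  ∑ t ∈ Finset.range N, g (x t) (x (t + 1)) (u t)

lemma runningCost_congr {N : ℕ} {u' : ℕ → U} {x' : ℕ → X} (hx : ∀ s ≤ N, x' s = x s)
    (hu : ∀ s < N, u' s = u s) : runningCost g u' x' N = runningCost g u x N :=
  Finset.sum_congr rfl fun t ht => by
    rw [Finset.mem_range] at ht
    rw [hx t ht.le, hx (t + 1) ht, hu t ht]

lemma runningCost_add (N k : ℕ) :
    runningCost g u x (N + k) =
      runningCost g u x N + runningCost g (fun j => u (N + j)) (fun j => x (N + j)) k := by
  simp only [runningCost, Finset.sum_range_add, add_assoc]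

lemma exists_first_stop (h : ∃ t, v t = true) : ∃ T, v T = true ∧ ∀ t < T, v t = false :=
  ⟨Nat.find h, Nat.find_spec h, fun t ht => by simpa using Nat.find_min h ht⟩

lemma totalCost_eq_of_first_stop {N : ℕ} (hN : v N = true) (hlt : ∀ t < N, v t = false) :
    totalCost g G u v x = runningCost g u x N + G N x := by
  have hv : ∃ t, v t = true := ⟨N, hN⟩
  have hfind : Nat.find hv = N :=
    (Nat.find_eq_iff hv).2 ⟨hN, fun t ht => by simp [hlt t ht]⟩
  rw [totalCost, dif_pos hv, hfind, runningCost]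

lemma totalCost_eq_top (hv : ∀ t, v t = false) : totalCost g G u v x = ⊤ := by
  simp [totalCost, hv]

lemma runningCost_le_totalCost {N : ℕ} (hv : ∀ t < N, v t = false) :
    runningCost g u x N ≤ totalCost g G u v x := by
  rw [totalCost]
  split_ifs with h
  · have hN : N ≤ Nat.find h := (Nat.le_find_iff h N).2 fun t ht => by simp [hv t ht]
    exact (Finset.sum_le_sum_of_subset (Finset.range_subset_range.2 hN)).trans le_self_add
  · exact le_top

lemma totalCost_le_perf (h : ClosedLoop F μ p u v x) : totalCost g G u v x ≤ perf F g G μ p :=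
  le_iSup_of_le u <| le_iSup_of_le v <| le_iSup_of_le x <| le_iSup_of_le h le_rfl

lemma perf_le {c : ℝ≥0∞}
    (h : ∀ u v x, ClosedLoop F μ p u v x → totalCost g G u v x ≤ c) : perf F g G μ p ≤ c :=
  iSup_le fun u => iSup_le fun v => iSup_le fun x => iSup_le fun hcl => h u v x hcl

lemma value_le_perf (hμ : IsController μ) : value F g G p ≤ perf F g G μ p :=
  iInf₂_le μ hμ

end ClosedLoop

section Extension

variable {X U : Type*}

def AdmissibleUpTo (F : X → U → Set X) (μ : ℕ → (ℕ → X) → (ℕ → U) → Set (U × Bool))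
    (N : ℕ) (u : ℕ → U) (v : ℕ → Bool) (x : ℕ → X) : Prop :=
  ∀ t < N, x (t + 1) ∈ F (x t) (u t) ∧ (u t, v t) ∈ μ t x u

/-- Stage `k` of the extension of the history `H` past time `N`, choosing the control and
stopping flag with `pick` and the successor state with `next`; it is final up to time `N + k`. -/
def extendHist (next : X → U → X) (pick : ℕ → (ℕ → X) → (ℕ → U) → U × Bool) (N : ℕ)
    (H : (ℕ → X) × (ℕ → U) × (ℕ → Bool)) : ℕ → (ℕ → X) × (ℕ → U) × (ℕ → Bool)
  | 0 => H
  | k + 1 =>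
    let (x, u, v) := extendHist next pick N H k
    let w := pick (N + k) x u
    (Function.update x (N + k + 1) (next (x (N + k)) w.1),
      Function.update u (N + k) w.1, Function.update v (N + k) w.2)

variable {F : X → U → Set X} {μ : ℕ → (ℕ → X) → (ℕ → U) → Set (U × Bool)}
  {N : ℕ} {u : ℕ → U} {v : ℕ → Bool} {x : ℕ → X}

lemma AdmissibleUpTo.exists_closedLoop (hF : ∀ a b, (F a b).Nonempty) (hμ : IsController μ)
    (h : AdmissibleUpTo F μ N u v x) :
    ∃ u' v' x', ClosedLoop F μ (x 0) u' v' x' ∧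
      (∀ s ≤ N, x' s = x s) ∧ (∀ s < N, u' s = u s) ∧ ∀ s < N, v' s = v s := by
  choose next hnext using hF
  choose pick hpick using hμ.1
  set H := extendHist next pick N (x, u, v)
  set x' := fun s => (H (s + 1)).1 s
  set u' := fun s => (H (s + 1)).2.1 s
  set v' := fun s => (H (s + 1)).2.2 s
  have hx : ∀ k s, s < N + 1 + k → (H k).1 s = x' s := fun k s =>
    apply_eq_diag_of_agree (f := fun k => (H k).1) fun k s hs =>
      Function.update_of_ne (by omega) _ _
  have hu : ∀ k s, s < N + k → (H k).2.1 s = u' s := fun k s =>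
    apply_eq_diag_of_agree (f := fun k => (H k).2.1) fun k s hs =>
      Function.update_of_ne (by omega) _ _
  have hv : ∀ k s, s < N + k → (H k).2.2 s = v' s := fun k s =>
    apply_eq_diag_of_agree (f := fun k => (H k).2.2) fun k s hs =>
      Function.update_of_ne (by omega) _ _
  have hx₀ : ∀ s ≤ N, x' s = x s := fun s hs => (hx 0 s (by omega)).symm
  have hu₀ : ∀ s < N, u' s = u s := fun s hs => (hu 0 s (by omega)).symm
  have hv₀ : ∀ s < N, v' s = v s := fun s hs => (hv 0 s (by omega)).symm
  have hμH : ∀ k, μ (N + k) (H k).1 (H k).2.1 = μ (N + k) x' u' :=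
    fun k => hμ.2 _ _ _ _ _ (fun s hs => hx k s (by omega)) (fun s hs => hu k s hs)
  have hstep : ∀ k, x' (N + k + 1) = next (x' (N + k)) (u' (N + k)) ∧
      (u' (N + k), v' (N + k)) = pick (N + k) (H k).1 (H k).2.1 := by
    intro k
    rw [← hx (k + 1) (N + k + 1) (by omega), ← hx k (N + k) (by omega),
      ← hu (k + 1) (N + k) (by omega), ← hv (k + 1) (N + k) (by omega)]
    simp [H, extendHist]
  refine ⟨u', v', x', ⟨⟨hx₀ 0 (Nat.zero_le N), fun t => ?_⟩, fun t => ?_⟩, hx₀, hu₀, hv₀⟩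
  · rcases lt_or_ge t N with ht | ht
    · rw [hx₀ t ht.le, hx₀ (t + 1) ht, hu₀ t ht]
      exact (h t ht).1
    · obtain ⟨k, rfl⟩ := Nat.exists_eq_add_of_le ht
      rw [(hstep k).1]
      exact hnext _ _
  · rcases lt_or_ge t N with ht | ht
    · rw [hμ.2 t x' x u' u (fun s hs => hx₀ s (by omega)) (fun s hs => hu₀ s (by omega)),
        hu₀ t ht, hv₀ t ht]
      exact (h t ht).2
    · obtain ⟨k, rfl⟩ := Nat.exists_eq_add_of_le ht
      rw [(hstep k).2, ← hμH]
      exact hpick _ _ _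

end Extension

section Tail

variable {X U : Type*} {F : X → U → Set X} {g : X → X → U → ℝ≥0∞}
  {G G' : ℕ → (ℕ → X) → ℝ≥0∞} {μ : ℕ → (ℕ → X) → (ℕ → U) → Set (U × Bool)}
  {T : ℕ} {u : ℕ → U} {v : ℕ → Bool} {x : ℕ → X}

lemma runningCost_le_perf (hF : ∀ a b, (F a b).Nonempty) (hμ : IsController μ)
    (h : AdmissibleUpTo F μ T u v x) (hv : ∀ t < T, v t = false) :
    runningCost g u x T ≤ perf F g G μ (x 0) := by
  obtain ⟨u', v', x', hcl, hx, hu, hv'⟩ := h.exists_closedLoop hF hμ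
  rw [← runningCost_congr hx hu]
  exact (runningCost_le_totalCost fun t ht => (hv' t ht).trans (hv t ht)).trans
    (totalCost_le_perf hcl)

lemma exists_runningCost_add_le_perf (hF : ∀ a b, (F a b).Nonempty) (hμ : IsController μ)
    (h : AdmissibleUpTo F μ (T + 1) u v x) (hv : ∀ t < T, v t = false) (hvT : v T = true) :
    ∃ y : ℕ → X, (∀ s ≤ T, y s = x s) ∧ runningCost g u x T + G T y ≤ perf F g G μ (x 0) := by
  obtain ⟨u', v', x', hcl, hx, hu, hv'⟩ := h.exists_closedLoop hF hμ
  refine ⟨x', fun s hs => hx s (by omega), ?_⟩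
  rw [← runningCost_congr (fun s hs => hx s (by omega)) (fun s hs => hu s (by omega)),
    ← totalCost_eq_of_first_stop ((hv' T (by omega)).trans hvT)
      (fun t ht => (hv' t (by omega)).trans (hv t ht))]
  exact totalCost_le_perf hcl

def tailCtrl (μ : ℕ → (ℕ → X) → (ℕ → U) → Set (U × Bool)) (T : ℕ) (x : ℕ → X) (u : ℕ → U) :
    ℕ → (ℕ → X) → (ℕ → U) → Set (U × Bool) :=
  fun t x' u' => μ (T + t) (splice T x x') (splice T u u')

lemma isController_tailCtrl (hμ : IsController μ) (T : ℕ) (x : ℕ → X) (u : ℕ → U) :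
    IsController (tailCtrl μ T x u) := by
  refine ⟨fun t x' u' => hμ.1 _ _ _, fun t x₁ x₂ u₁ u₂ hx hu => hμ.2 _ _ _ _ _ ?_ ?_⟩
  · intro s hs
    by_cases h : s < T
    · simp [splice, h]
    · simp only [splice, if_neg h]
      exact hx (s - T) (by omega)
  · intro s hs
    by_cases h : s < T
    · simp [splice, h]
    · simp only [splice, if_neg h]
      exact hu (s - T) (by omega)

lemma closedLoop_splice (hμ : IsController μ) (h : AdmissibleUpTo F μ T u v x) {u' : ℕ → U}
    {v' : ℕ → Bool} {x' : ℕ → X} (hcl : ClosedLoop F (tailCtrl μ T x u) (x T) u' v' x') :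
    ClosedLoop F μ (x 0) (splice T u u') (splice T v v') (splice T x x') := by
  obtain ⟨⟨hx₀, hxF⟩, hmem⟩ := hcl
  refine ⟨⟨splice_of_le hx₀ (Nat.zero_le T), fun t => ?_⟩, fun t => ?_⟩
  · rcases lt_or_ge t T with ht | ht
    · rw [splice_of_le hx₀ ht.le, splice_of_le hx₀ ht, splice_of_lt ht]
      exact (h t ht).1
    · obtain ⟨k, rfl⟩ := Nat.exists_eq_add_of_le ht
      rw [splice_add, splice_add, add_assoc, splice_add]
      exact hxF k
  · rcases lt_or_ge t T with ht | ht
    · rw [hμ.2 t _ x _ u (fun s hs => splice_of_le hx₀ (by omega))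
          (fun s hs => splice_of_lt (by omega)), splice_of_lt ht, splice_of_lt ht]
      exact (h t ht).2
    · obtain ⟨k, rfl⟩ := Nat.exists_eq_add_of_le ht
      rw [splice_add, splice_add]
      exact hmem k

lemma runningCost_add_totalCost_le_splice {u' : ℕ → U} {v' : ℕ → Bool} {x' : ℕ → X}
    (hv : ∀ t < T, v t = false) (hx₀ : x' 0 = x T)
    (hG : ∀ k, G' k x' ≤ G (T + k) (splice T x x')) :
    runningCost g u x T + totalCost g G' u' v' x' ≤
      totalCost g G (splice T u u') (splice T v v') (splice T x x') := by
  have hfalse : ∀ k, (∀ j < k, v' j = false) → ∀ t < T + k, splice T v v' t = false := by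
    intro k hk t ht
    rcases lt_or_ge t T with htT | htT
    · rw [splice_of_lt htT, hv t htT]
    · obtain ⟨j, rfl⟩ := Nat.exists_eq_add_of_le htT
      rw [splice_add, hk j (by omega)]
  by_cases hstop : ∃ k, v' k = true
  · obtain ⟨k, hk, hlt⟩ := exists_first_stop hstop
    rw [totalCost_eq_of_first_stop hk hlt,
      totalCost_eq_of_first_stop (by rwa [splice_add]) (hfalse k hlt), runningCost_add,
      add_assoc]
    gcongr
    · exact (runningCost_congr (fun s hs => splice_of_le hx₀ hs)
        (fun s hs => splice_of_lt hs)).ge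
    · simp only [splice_add]
      exact le_rfl
    · exact hG k
  · simp only [not_exists, Bool.not_eq_true] at hstop
    rw [totalCost_eq_top fun t => hfalse (t + 1) (fun j _ => hstop j) t (by omega)]
    exact le_top

lemma runningCost_add_perf_tailCtrl_le (hF : ∀ a b, (F a b).Nonempty) (hμ : IsController μ)
    (h : AdmissibleUpTo F μ T u v x) (hv : ∀ t < T, v t = false)
    (hG : ∀ k y, y 0 = x T → G' k y ≤ G (T + k) (splice T x y)) :
    runningCost g u x T + perf F g G' (tailCtrl μ T x u) (x T) ≤ perf F g G μ (x 0) := by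
  set L := perf F g G μ (x 0)
  have hrun : runningCost g u x T ≤ L := runningCost_le_perf hF hμ h hv
  by_cases hL : L = ⊤
  · exact hL ▸ le_top
  have htail : perf F g G' (tailCtrl μ T x u) (x T) ≤ L - runningCost g u x T :=
    perf_le fun u' v' x' hcl => ENNReal.le_sub_of_add_le_left (ne_top_of_le_ne_top hL hrun) <|
      (runningCost_add_totalCost_le_splice hv hcl.1.1 fun k => hG k x' hcl.1.1).trans
        (totalCost_le_perf (closedLoop_splice hμ h hcl))
  calc runningCost g u x T + perf F g G' (tailCtrl μ T x u) (x T)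
      ≤ runningCost g u x T + (L - runningCost g u x T) := by gcongr
    _ = L := add_tsub_cancel_of_le hrun

end Tail

section StopOnReach

variable {X U : Type*} {F : X → U → Set X} {g : X → X → U → ℝ≥0∞} {G₀ : X → ℝ≥0∞}
  {A₁ A₂ : Set X} {μ : ℕ → (ℕ → X) → (ℕ → U) → Set (U × Bool)}

lemma reachAvoidCost_le_twoPhaseCost {k n : ℕ} {y z : ℕ → X} (hyz : z n = y k)
    (hA₁ : ∃ s ≤ n, z s ∈ A₁) : reachAvoidCost A₂ G₀ k y ≤ twoPhaseCost A₁ A₂ G₀ n z := by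
  simp only [reachAvoidCost, twoPhaseCost, hyz]
  split_ifs <;> simp_all

lemma twoPhaseCost_eq_top {n : ℕ} {z : ℕ → X} (hA₁ : ∀ s ≤ n, z s ∉ A₁) :
    twoPhaseCost A₁ A₂ G₀ n z = ⊤ := by
  simp only [twoPhaseCost]
  rw [if_neg fun h => absurd h.1 (by simpa using hA₁)]

def stopOnReach (A : Set X) (μ : ℕ → (ℕ → X) → (ℕ → U) → Set (U × Bool)) :
    ℕ → (ℕ → X) → (ℕ → U) → Set (U × Bool) :=
  fun t x u => if ∃ s ≤ t, x s ∈ A then (fun w => (w.1, true)) '' μ t x u else μ t x u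

lemma isController_stopOnReach (A : Set X) (hμ : IsController μ) :
    IsController (stopOnReach A μ) := by
  refine ⟨fun t x u => ?_, fun t x x' u u' hx hu => ?_⟩
  · unfold stopOnReach
    split_ifs
    exacts [(hμ.1 t x u).image _, hμ.1 t x u]
  · have hreach : (∃ s ≤ t, x s ∈ A) ↔ ∃ s ≤ t, x' s ∈ A :=
      exists_congr fun s => and_congr_right fun hs => by rw [hx s hs]
    simp only [stopOnReach, hreach, hμ.2 t x x' u u' hx hu]

lemma mem_of_mem_stopOnReach {t : ℕ} {x : ℕ → X} {u : ℕ → U} {w : U × Bool}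
    (hw : w ∈ stopOnReach A₁ μ t x u) (ht : ¬∃ s ≤ t, x s ∈ A₁) : w ∈ μ t x u := by
  simpa [stopOnReach, ht] using hw

lemma snd_eq_true_of_mem_stopOnReach {t : ℕ} {x : ℕ → X} {u : ℕ → U} {w : U × Bool}
    (hw : w ∈ stopOnReach A₁ μ t x u) (ht : ∃ s ≤ t, x s ∈ A₁) : w.2 = true := by
  simp only [stopOnReach, if_pos ht, Set.mem_image] at hw
  obtain ⟨w', -, rfl⟩ := hw
  rfl

lemma totalCost_stopOnReach_le (hF : ∀ a b, (F a b).Nonempty) (hμ : IsController μ)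
    {p : X} {u : ℕ → U} {v : ℕ → Bool} {x : ℕ → X}
    (hcl : ClosedLoop F (stopOnReach A₁ μ) p u v x) :
    totalCost g (reachAvoidCost A₁ (value F g (reachAvoidCost A₂ G₀))) u v x ≤
      perf F g (twoPhaseCost A₁ A₂ G₀) μ p := by
  obtain ⟨⟨rfl, hxF⟩, hmem⟩ := hcl
  have hfollow t (ht : ¬∃ s ≤ t, x s ∈ A₁) := mem_of_mem_stopOnReach (hmem t) ht
  have hstop t (ht : ∃ s ≤ t, x s ∈ A₁) := snd_eq_true_of_mem_stopOnReach (hmem t) ht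
  by_cases hstops : ∃ t, v t = true
  swap
  · simp only [not_exists, Bool.not_eq_true] at hstops
    have hunreached : ∀ t, ¬∃ s ≤ t, x s ∈ A₁ := fun t h => by
      simpa [hstops t] using hstop t h
    rw [totalCost_eq_top hstops,
      ← totalCost_eq_top (g := g) (G := twoPhaseCost A₁ A₂ G₀) hstops]
    exact totalCost_le_perf ⟨⟨rfl, hxF⟩, fun t => hfollow t (hunreached t)⟩
  obtain ⟨T, hT, hbefore⟩ := exists_first_stop hstops
  have hunreached : ∀ s < T, x s ∉ A₁ := fun s hs hsA => by
    simpa [hbefore s hs] using hstop s ⟨s, le_rfl, hsA⟩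
  have hadm : AdmissibleUpTo F μ T u v x := fun t ht =>
    ⟨hxF t, hfollow t fun ⟨s, hs, hsA⟩ => hunreached s (by omega) hsA⟩
  rw [totalCost_eq_of_first_stop hT hbefore]
  by_cases hA : x T ∈ A₁
  · simp only [reachAvoidCost, if_pos hA]
    calc runningCost g u x T + value F g (reachAvoidCost A₂ G₀) (x T)
        ≤ runningCost g u x T + perf F g (reachAvoidCost A₂ G₀) (tailCtrl μ T x u) (x T) := by
          gcongr
          exact value_le_perf (isController_tailCtrl hμ T x u)
      _ ≤ _ := runningCost_add_perf_tailCtrl_le hF hμ hadm hbefore fun k y hy =>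
          reachAvoidCost_le_twoPhaseCost (splice_add k)
            ⟨T, by omega, by rwa [splice_of_le hy le_rfl]⟩
  · have hunreached' : ∀ s ≤ T, x s ∉ A₁ := fun s hs =>
      hs.lt_or_eq.elim (hunreached s) (· ▸ hA)
    have hadm' : AdmissibleUpTo F μ (T + 1) u v x := fun t ht =>
      ⟨hxF t, hfollow t fun ⟨s, hs, hsA⟩ => hunreached' s (by omega) hsA⟩
    obtain ⟨y, hy, hcost⟩ := exists_runningCost_add_le_perf (g := g)
      (G := twoPhaseCost A₁ A₂ G₀) hF hμ hadm' hbefore hT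
    rw [twoPhaseCost_eq_top fun s hs => hy s hs ▸ hunreached' s hs] at hcost
    simpa [reachAvoidCost, hA] using hcost

end StopOnReach

theorem perf_optimal_ge_general
    {X U : Type*}
    (F : X → U → Set X) (hF : ∀ x u, (F x u).Nonempty)
    (g : X → X → U → ℝ≥0∞) (G₀ : X → ℝ≥0∞)
    (A₁ A₂ : Set X)
    (μ₂ : X → Set (U × Bool))
    (hopt₂ : ∀ q, perf F g (reachAvoidCost A₂ G₀) (ofMemoryless μ₂) q =
      value F g (reachAvoidCost A₂ G₀) q)
    (μ₁ : X → Set (U × Bool))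
    (hopt₁ : ∀ q, perf F g
        (reachAvoidCost A₁
          (fun r => perf F g (reachAvoidCost A₂ G₀) (ofMemoryless μ₂) r))
        (ofMemoryless μ₁) q =
      value F g
        (reachAvoidCost A₁
          (fun r => perf F g (reachAvoidCost A₂ G₀) (ofMemoryless μ₂) r)) q)
    (μStar : ℕ → (ℕ → X) → (ℕ → U) → Set (U × Bool)) (hμStar : IsController μStar)
    (p : X) :
    perf F g (twoPhaseCost A₁ A₂ G₀) μStar p ≥
      perf F g
        (reachAvoidCost A₁
          (fun q => perf F g (reachAvoidCost A₂ G₀) (ofMemoryless μ₂) q))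
        (ofMemoryless μ₁) p := by
  have hV₂ : (fun q => perf F g (reachAvoidCost A₂ G₀) (ofMemoryless μ₂) q) =
      value F g (reachAvoidCost A₂ G₀) := funext hopt₂
  rw [ge_iff_le, hopt₁ p, hV₂]
  exact (value_le_perf (isController_stopOnReach A₁ hμStar)).trans
    (perf_le fun u v x hcl => totalCost_stopOnReach_le hF hμStar hcl)

/-- key inequality in the proof of Theorem 1.  With `Π`,
`Π₁`, `Π₂` as in Proposition 1, `μ₂` a memoryless controller optimal for `Π₂`
and `μ₁` a memoryless controller optimal for `Π₁`, every controller `μ*`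
that is optimal for `Π` satisfies `L(p,μ*) ≥ L₁(p,μ₁)` for all `p ∈ X`. -/
theorem perf_optimal_ge
    {X U : Type*} [Nonempty X] [Nonempty U]
    (F : X → U → Set X) (hF : ∀ x u, (F x u).Nonempty)
    (g : X → X → U → ℝ≥0∞) (G₀ : X → ℝ≥0∞)
    (A₁ A₂ : Set X) (hA₁ : A₁.Nonempty) (hA₂ : A₂.Nonempty)
    (μ₂ : X → Set (U × Bool)) (hμ₂ : ∀ q, (μ₂ q).Nonempty)
    (hopt₂ : ∀ q, perf F g (reachAvoidCost A₂ G₀) (ofMemoryless μ₂) q =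
      value F g (reachAvoidCost A₂ G₀) q)
    (μ₁ : X → Set (U × Bool)) (hμ₁ : ∀ q, (μ₁ q).Nonempty)
    (hopt₁ : ∀ q, perf F g
        (reachAvoidCost A₁
          (fun r => perf F g (reachAvoidCost A₂ G₀) (ofMemoryless μ₂) r))
        (ofMemoryless μ₁) q =
      value F g
        (reachAvoidCost A₁
          (fun r => perf F g (reachAvoidCost A₂ G₀) (ofMemoryless μ₂) r)) q)
    (μStar : ℕ → (ℕ → X) → (ℕ → U) → Set (U × Bool)) (hμStar : IsController μStar)
    (hoptStar : ∀ q, perf F g (twoPhaseCost A₁ A₂ G₀) μStar q =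
      value F g (twoPhaseCost A₁ A₂ G₀) q)
    (p : X) :
    perf F g (twoPhaseCost A₁ A₂ G₀) μStar p ≥
      perf F g
        (reachAvoidCost A₁
          (fun q => perf F g (reachAvoidCost A₂ G₀) (ofMemoryless μ₂) q))
        (ofMemoryless μ₁) p :=
  perf_optimal_ge_general F hF g G₀ A₁ A₂ μ₂ hopt₂ μ₁ hopt₁ μStar hμStar p

end TwoPhase
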